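/- arXiv:1303.3320 — 2 statements merged into one kernel-verified Lean document; each statement's English description precedes it below -/
import Mathlib

section
/- Let G ∈ ℂ^{s×s} be antisymmetric (Gᵀ = −G) and suppose G Θ⁻(x) + Θ⁻(x) Gᵀ − Θ⁻(Gx) = 0 holds where x ranges over a basis (so equivalently (I⊗G)F + (G⊗I)F − FG = 0). Then G = Θ⁻(g) where g ∈ ℂ^s has components g_k = −(1/n) Tr(F_k G). Conversely, if G = Θ⁻(g) for some g ∈ ℂ^s, then G Θ⁻(x) + Θ⁻(x) Gᵀ − Θ⁻(Gx) = 0 for every x ∈ ℂ^s. -/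
open Matrix Kronecker BigOperators

/-- `Θ⁻(β)`, the s×s matrix with `(j,k)` entry `Σ_i β_i f_{ijk}`. -/
noncomputable def ThetaM (s : ℕ) (f : Fin s → Fin s → Fin s → ℝ) (β : Fin s → ℂ) :
    Matrix (Fin s) (Fin s) ℂ :=
  Matrix.of fun j k => ∑ i, β i * (f i j k : ℂ)

/-- The matrix `F_k` (over `ℂ`) with entries `(F_k)_{jl} = f_{kjl}`. -/
noncomputable def FmatC (s : ℕ) (f : Fin s → Fin s → Fin s → ℝ) (k : Fin s) :
    Matrix (Fin s) (Fin s) ℂ :=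
  Matrix.of fun j l => (f k j l : ℂ)

/-- The stacked matrix `F = (F_1,…,F_s)ᵀ` over `ℂ`: `F_{(i,j),k} = f_{ijk}`. -/
noncomputable def FstackC (s : ℕ) (f : Fin s → Fin s → Fin s → ℝ) :
    Matrix (Fin s × Fin s) (Fin s) ℂ :=
  Matrix.of fun p k => (f p.1 p.2 k : ℂ)

section ZAux

variable {s : ℕ} (F : Fin s → Fin s → Fin s → ℂ)

private lemma Zaux2 (h12 : ∀ i j k, F j i k = -F i j k) (h23 : ∀ i j k, F i k j = -F i j k)
    (hJ : ∀ i j k l, ∑ m, (F i l m * F m j k + F j l m * F i m k + F k l m * F i j m) = 0)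
    (a b j l : Fin s) :
    (∑ m, F a j m * F b m l) + (∑ m, F b j m * F a l m) - (∑ i, F a i b * F i j l) = 0 := by
  have e := hJ a b l j
  have h : (∑ m, F a j m * F b m l) + (∑ m, F b j m * F a l m) - (∑ i, F a i b * F i j l)
      = -∑ m, (F a j m * F m b l + F b j m * F a m l + F l j m * F a b m) := by
    rw [← Finset.sum_add_distrib, ← Finset.sum_sub_distrib, ← Finset.sum_neg_distrib]
    refine Finset.sum_congr rfl fun m _ => ?_
    rw [h12 b m l, h23 a l m, h12 j l m, h23 j m l, h12 m j l, h23 a m b]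
    ring
  rw [h, e, neg_zero]

private lemma ZauxB (h12 : ∀ i j k, F j i k = -F i j k) (h23 : ∀ i j k, F i k j = -F i j k)
    (hJ : ∀ i j k l, ∑ m, (F i l m * F m j k + F j l m * F i m k + F k l m * F i j m) = 0)
    (c d j l : Fin s) :
    (∑ q, F q j l * F q c d) = (∑ m, F l m d * F j m c) - (∑ k, F l c k * F j d k) := by
  have e := hJ j l c d
  have h : (∑ q, F q j l * F q c d) - ((∑ m, F l m d * F j m c) - (∑ k, F l c k * F j d k))
      = ∑ m, (F j d m * F m l c + F l d m * F j m c + F c d m * F j l m) := by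
    rw [← Finset.sum_sub_distrib, ← Finset.sum_sub_distrib]
    refine Finset.sum_congr rfl fun m _ => ?_
    rw [h12 j m l, h23 j l m, h12 c m d, h23 c d m, h12 l m c, h23 l c m, h23 l m d]
    ring
  exact sub_eq_zero.mp (h.trans e)

private lemma Zrot {α β γ : Type*} [Fintype α] [Fintype β] [Fintype γ] (h : α → β → γ → ℂ) :
    ∑ a, ∑ b, ∑ c, h a b c = ∑ c, ∑ a, ∑ b, h a b c := by
  calc ∑ a, ∑ b, ∑ c, h a b c = ∑ a, ∑ c, ∑ b, h a b c :=
        Finset.sum_congr rfl fun a _ => Finset.sum_comm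
    _ = ∑ c, ∑ a, ∑ b, h a b c := Finset.sum_comm

private lemma Zswap13 {α β γ : Type*} [Fintype α] [Fintype β] [Fintype γ] (h : α → β → γ → ℂ) :
    ∑ a, ∑ b, ∑ c, h a b c = ∑ c, ∑ b, ∑ a, h a b c := by
  calc ∑ a, ∑ b, ∑ c, h a b c = ∑ b, ∑ a, ∑ c, h a b c := Finset.sum_comm
    _ = ∑ b, ∑ c, ∑ a, h a b c := Finset.sum_congr rfl fun b _ => Finset.sum_comm
    _ = ∑ c, ∑ b, ∑ a, h a b c := Finset.sum_comm

end ZAux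

/-- If an antisymmetric `G` satisfies the (vectorized) commutation-preservation equation
`(I⊗G)F + (G⊗I)F − FG = 0`, then `G = Θ⁻(g)` with `g_k = −(1/n) Tr(F_k G)`.
Conversely, any `G = Θ⁻(g)` satisfies `GΘ⁻(x) + Θ⁻(x)Gᵀ − Θ⁻(Gx) = 0` for all `x`. -/
theorem ZLemma (n s : ℕ) (hs : s = n ^ 2 - 1)
    (f : Fin s → Fin s → Fin s → ℝ)
    (hfa : ∀ i j k, f j i k = -f i j k ∧ f i k j = -f i j k)
    (hJ : ∀ i j k l, ∑ m, (f i l m * f m j k + f j l m * f i m k + f k l m * f i j m) = 0)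
    (hc : ∀ i j, ∑ m, ∑ k, f i m k * f j m k = (n : ℝ) * if i = j then 1 else 0) :
    (∀ G : Matrix (Fin s) (Fin s) ℂ, Gᵀ = -G →
      ((1 : Matrix (Fin s) (Fin s) ℂ) ⊗ₖ G) * FstackC s f +
        (G ⊗ₖ (1 : Matrix (Fin s) (Fin s) ℂ)) * FstackC s f - FstackC s f * G = 0 →
      G = ThetaM s f (fun k => -(1 / (n : ℂ)) * (FmatC s f k * G).trace)) ∧
    (∀ g : Fin s → ℂ, ∀ x : Fin s → ℂ,
      ThetaM s f g * ThetaM s f x + ThetaM s f x * (ThetaM s f g)ᵀ -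
        ThetaM s f (ThetaM s f g *ᵥ x) = 0) := by
  set F : Fin s → Fin s → Fin s → ℂ := fun i j k => ((f i j k : ℝ) : ℂ) with hFdef
  have hF : ∀ i j k, ((f i j k : ℝ) : ℂ) = F i j k := fun _ _ _ => rfl
  have h12 : ∀ i j k, F i j k = -F j i k := by
    intro i j k
    simp only [hFdef, (hfa j i k).1]
    push_cast
    ring
  have h12' : ∀ i j k, F j i k = -F i j k := fun i j k => by rw [h12 j i k]
  have h23' : ∀ i j k, F i k j = -F i j k := by
    intro i j k
    simp only [hFdef, (hfa i j k).2]
    push_cast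
    ring
  have hJC : ∀ i j k l, ∑ m, (F i l m * F m j k + F j l m * F i m k + F k l m * F i j m) = 0 := by
    intro i j k l
    simp only [hFdef]
    exact_mod_cast hJ i j k l
  have hcC : ∀ i j, ∑ m, ∑ k, F i m k * F j m k = (n : ℂ) * if i = j then 1 else 0 := by
    intro i j
    have h := hc i j
    simp only [hFdef]
    by_cases hij : i = j
    · simp only [hij, if_true] at h ⊢
      exact_mod_cast h
    · simp only [hij, if_false] at h ⊢
      exact_mod_cast h
  constructor
  · intro G hGa heq
    rcases eq_or_ne s 0 with hs0 | hs0
    · subst hs0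
      ext i j
      exact i.elim0
    · have hn : (n : ℂ) ≠ 0 := by
        have hn' : n ≠ 0 := by rintro rfl; simp at hs; omega
        exact_mod_cast Nat.cast_ne_zero.mpr hn'
      have hGs : ∀ a b, G b a = -G a b := by
        intro a b
        have := congrFun (congrFun hGa a) b
        simpa using this
      have key : ∀ i j k, (∑ q, G j q * F i q k) + (∑ p, G i p * F p j k)
          - (∑ m, F i j m * G m k) = 0 := by
        intro i j k
        have h := congrFun (congrFun heq (i, j)) k
        simp only [Matrix.sub_apply, Matrix.add_apply, Matrix.mul_apply, FstackC,
          Matrix.zero_apply, Matrix.kroneckerMap_apply, Matrix.of_apply, Fintype.sum_prod_type,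
          Matrix.one_apply, ite_mul, one_mul, zero_mul, mul_ite, mul_one, mul_zero,
          Finset.sum_ite_irrel, Finset.sum_const_zero, Finset.sum_ite_eq,
          Finset.mem_univ, if_true, hF] at h
        exact h
      have main : ∀ j l, (n : ℂ) * G j l = ∑ c, ∑ d, G c d * ∑ q, F q j l * F q c d := by
        intro j l
        have h0 : (∑ a, ∑ k, F l a k * ∑ q, G a q * F j q k)
            + (∑ a, ∑ k, F l a k * ∑ p, G j p * F p a k)
            - (∑ a, ∑ k, F l a k * ∑ m, F j a m * G m k) = 0 := by
          rw [← Finset.sum_add_distrib, ← Finset.sum_sub_distrib]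
          refine Finset.sum_eq_zero fun a _ => ?_
          rw [← Finset.sum_add_distrib, ← Finset.sum_sub_distrib]
          refine Finset.sum_eq_zero fun k _ => ?_
          linear_combination (F l a k) * key j a k
        have S2eq : (∑ a, ∑ k, F l a k * ∑ p, G j p * F p a k) = (n : ℂ) * G j l := by
          calc (∑ a, ∑ k, F l a k * ∑ p, G j p * F p a k)
              = ∑ a, ∑ k, ∑ p, G j p * (F l a k * F p a k) := by
                refine Finset.sum_congr rfl fun a _ => Finset.sum_congr rfl fun k _ => ?_
                rw [Finset.mul_sum]
                exact Finset.sum_congr rfl fun p _ => by ring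
            _ = ∑ p, ∑ a, ∑ k, G j p * (F l a k * F p a k) := Zrot _
            _ = ∑ p, G j p * ∑ a, ∑ k, F l a k * F p a k := by
                refine Finset.sum_congr rfl fun p _ => ?_
                rw [Finset.mul_sum]
                exact Finset.sum_congr rfl fun a _ => (Finset.mul_sum _ _ _).symm
            _ = ∑ p, G j p * ((n : ℂ) * if l = p then 1 else 0) := by
                refine Finset.sum_congr rfl fun p _ => ?_
                rw [hcC l p]
            _ = (n : ℂ) * G j l := by
                simp only [mul_ite, mul_one, mul_zero, Finset.sum_ite_eq, Finset.mem_univ,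
                  if_true]
                ring
        have S3eq : (∑ a, ∑ k, F l a k * ∑ m, F j a m * G m k)
            = ∑ c, ∑ d, G c d * ∑ m, F l m d * F j m c := by
          calc (∑ a, ∑ k, F l a k * ∑ m, F j a m * G m k)
              = ∑ a, ∑ k, ∑ m, F l a k * (F j a m * G m k) := by
                refine Finset.sum_congr rfl fun a _ => Finset.sum_congr rfl fun k _ => ?_
                rw [Finset.mul_sum]
            _ = ∑ m, ∑ k, ∑ a, F l a k * (F j a m * G m k) := Zswap13 _
            _ = ∑ c, ∑ d, G c d * ∑ m, F l m d * F j m c := by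
                refine Finset.sum_congr rfl fun c _ => Finset.sum_congr rfl fun d _ => ?_
                rw [Finset.mul_sum]
                exact Finset.sum_congr rfl fun m _ => by ring
        have S1eq : (∑ a, ∑ k, F l a k * ∑ q, G a q * F j q k)
            = ∑ c, ∑ d, G c d * ∑ k, F l c k * F j d k := by
          calc (∑ a, ∑ k, F l a k * ∑ q, G a q * F j q k)
              = ∑ a, ∑ k, ∑ q, F l a k * (G a q * F j q k) := by
                refine Finset.sum_congr rfl fun a _ => Finset.sum_congr rfl fun k _ => ?_
                rw [Finset.mul_sum]
            _ = ∑ a, ∑ q, ∑ k, F l a k * (G a q * F j q k) :=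
                Finset.sum_congr rfl fun a _ => Finset.sum_comm
            _ = ∑ c, ∑ d, G c d * ∑ k, F l c k * F j d k := by
                refine Finset.sum_congr rfl fun c _ => Finset.sum_congr rfl fun d _ => ?_
                rw [Finset.mul_sum]
                exact Finset.sum_congr rfl fun k _ => by ring
        rw [S1eq, S2eq, S3eq] at h0
        have hsplit : ∑ c, ∑ d, G c d * ∑ q, F q j l * F q c d
            = (∑ c, ∑ d, G c d * ∑ m, F l m d * F j m c)
              - (∑ c, ∑ d, G c d * ∑ k, F l c k * F j d k) := by
          rw [← Finset.sum_sub_distrib]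
          refine Finset.sum_congr rfl fun c _ => ?_
          rw [← Finset.sum_sub_distrib]
          refine Finset.sum_congr rfl fun d _ => ?_
          rw [ZauxB F h12' h23' hJC c d j l]
          ring
        rw [hsplit]
        linear_combination h0
      ext j l
      simp only [ThetaM, Matrix.of_apply, Matrix.trace, Matrix.diag_apply, Matrix.mul_apply,
        FmatC, hF]
      have expand : ∑ i, (-(1 / (n : ℂ)) * ∑ c, ∑ d, F i c d * G d c) * F i j l
          = (1 / (n : ℂ)) * ∑ c, ∑ d, G c d * ∑ q, F q j l * F q c d := by
        calc ∑ i, (-(1 / (n : ℂ)) * ∑ c, ∑ d, F i c d * G d c) * F i j l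
            = ∑ i, ∑ c, ∑ d, -(1 / (n : ℂ)) * (F i c d * G d c) * F i j l := by
              refine Finset.sum_congr rfl fun i _ => ?_
              rw [Finset.mul_sum, Finset.sum_mul]
              refine Finset.sum_congr rfl fun c _ => ?_
              rw [Finset.mul_sum, Finset.sum_mul]
          _ = ∑ c, ∑ d, ∑ i, -(1 / (n : ℂ)) * (F i c d * G d c) * F i j l := by
              rw [Zswap13]
              exact Finset.sum_comm
          _ = (1 / (n : ℂ)) * ∑ c, ∑ d, G c d * ∑ q, F q j l * F q c d := by
              rw [Finset.mul_sum]
              refine Finset.sum_congr rfl fun c _ => ?_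
              rw [Finset.mul_sum]
              refine Finset.sum_congr rfl fun d _ => ?_
              rw [hGs c d, Finset.mul_sum, Finset.mul_sum]
              exact Finset.sum_congr rfl fun q _ => by ring
      rw [expand, ← main j l]
      field_simp
  · intro g x
    ext j l
    simp only [ThetaM, Matrix.mul_apply, Matrix.of_apply, Matrix.transpose_apply,
      Matrix.mulVec, dotProduct, Matrix.sub_apply, Matrix.add_apply, Matrix.zero_apply,
      hF]
    have T1 : ∑ m, (∑ a, g a * F a j m) * (∑ b, x b * F b m l)
        = ∑ a, ∑ b, g a * x b * ∑ m, F a j m * F b m l := by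
      calc ∑ m, (∑ a, g a * F a j m) * (∑ b, x b * F b m l)
          = ∑ m, ∑ a, ∑ b, (g a * F a j m) * (x b * F b m l) := by
            refine Finset.sum_congr rfl fun m _ => ?_
            rw [Finset.sum_mul_sum]
        _ = ∑ a, ∑ b, ∑ m, (g a * F a j m) * (x b * F b m l) := by
            rw [Zswap13]
            exact Finset.sum_comm
        _ = ∑ a, ∑ b, g a * x b * ∑ m, F a j m * F b m l := by
            refine Finset.sum_congr rfl fun a _ => Finset.sum_congr rfl fun b _ => ?_
            rw [Finset.mul_sum]
            exact Finset.sum_congr rfl fun m _ => by ring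
    have T2 : ∑ m, (∑ b, x b * F b j m) * (∑ a, g a * F a l m)
        = ∑ a, ∑ b, g a * x b * ∑ m, F b j m * F a l m := by
      calc ∑ m, (∑ b, x b * F b j m) * (∑ a, g a * F a l m)
          = ∑ m, ∑ b, ∑ a, (x b * F b j m) * (g a * F a l m) := by
            refine Finset.sum_congr rfl fun m _ => ?_
            rw [Finset.sum_mul_sum]
        _ = ∑ a, ∑ b, ∑ m, (x b * F b j m) * (g a * F a l m) := Zswap13 _
        _ = ∑ a, ∑ b, g a * x b * ∑ m, F b j m * F a l m := by
            refine Finset.sum_congr rfl fun a _ => Finset.sum_congr rfl fun b _ => ?_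
            rw [Finset.mul_sum]
            exact Finset.sum_congr rfl fun m _ => by ring
    have T3 : ∑ i, (∑ b, (∑ a, g a * F a i b) * x b) * F i j l
        = ∑ a, ∑ b, g a * x b * ∑ i, F a i b * F i j l := by
      calc ∑ i, (∑ b, (∑ a, g a * F a i b) * x b) * F i j l
          = ∑ i, ∑ b, ∑ a, ((g a * F a i b) * x b) * F i j l := by
            refine Finset.sum_congr rfl fun i _ => ?_
            rw [Finset.sum_mul]
            refine Finset.sum_congr rfl fun b _ => ?_
            rw [Finset.sum_mul, Finset.sum_mul]
        _ = ∑ a, ∑ b, ∑ i, ((g a * F a i b) * x b) * F i j l := Zswap13 _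
        _ = ∑ a, ∑ b, g a * x b * ∑ i, F a i b * F i j l := by
            refine Finset.sum_congr rfl fun a _ => Finset.sum_congr rfl fun b _ => ?_
            rw [Finset.mul_sum]
            exact Finset.sum_congr rfl fun i _ => by ring
    rw [T1, T2, T3, ← Finset.sum_add_distrib, ← Finset.sum_sub_distrib]
    refine Finset.sum_eq_zero fun a _ => ?_
    rw [← Finset.sum_add_distrib, ← Finset.sum_sub_distrib]
    refine Finset.sum_eq_zero fun b _ => ?_
    linear_combination (g a * x b) * Zaux2 F h12' h23' hJC a b j l
end

section
/- If G ∈ ℂ^{s×s} is antisymmetric and satisfies (I⊗G)F + (G⊗I)F − FG = 0, then the entries of G satisfy G_{ij} = −(1/n) Σ_{k=1}^s f_{ijk} Tr(F_k G). -/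
open Matrix Kronecker BigOperators

/-- If an antisymmetric `G` satisfies `(I⊗G)F + (G⊗I)F − FG = 0`, then
`G_{ij} = −(1/n) Σ_k f_{ijk} Tr(F_k G)`. -/
theorem ZLemma_entries (n s : ℕ) (hs : s = n ^ 2 - 1)
    (f : Fin s → Fin s → Fin s → ℝ)
    (hfa : ∀ i j k, f j i k = -f i j k ∧ f i k j = -f i j k)
    (hJ : ∀ i j k l, ∑ m, (f i l m * f m j k + f j l m * f i m k + f k l m * f i j m) = 0)
    (hc : ∀ i j, ∑ m, ∑ k, f i m k * f j m k = (n : ℝ) * if i = j then 1 else 0)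
    (G : Matrix (Fin s) (Fin s) ℂ) (hGa : Gᵀ = -G)
    (hveceq : ((1 : Matrix (Fin s) (Fin s) ℂ) ⊗ₖ G) * FstackC s f +
      (G ⊗ₖ (1 : Matrix (Fin s) (Fin s) ℂ)) * FstackC s f - FstackC s f * G = 0) :
    ∀ i j, G i j = -(1 / (n : ℂ)) * ∑ k, (f i j k : ℂ) * (FmatC s f k * G).trace := by
  intro p q
  -- complex structure constants
  set F' : Fin s → Fin s → Fin s → ℂ := fun a b c => (f a b c : ℂ) with hF'
  -- basic antisymmetry over ℂ
  have h12 : ∀ a b c, F' b a c = -F' a b c := by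
    intro a b c; simp only [hF']; exact_mod_cast congrArg Complex.ofReal (hfa a b c).1
  have h23 : ∀ a b c, F' a c b = -F' a b c := by
    intro a b c; simp only [hF']; exact_mod_cast congrArg Complex.ofReal (hfa a b c).2
  have hcyc : ∀ a b c, F' b c a = F' a b c := by
    intro a b c; have e1 := h23 b c a; have e2 := h12 a b c; linear_combination e1 - e2
  -- G antisymmetry entrywise
  have hG : ∀ a b, G b a = -G a b := by
    intro a b; have := congrFun (congrFun hGa a) b
    simpa [Matrix.transpose_apply] using this
  -- n ≠ 0 (otherwise Fin s is empty)
  have hn : (n : ℂ) ≠ 0 := by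
    rcases Nat.eq_zero_or_pos n with h | h
    · exfalso; rw [h] at hs; simp at hs; exact (hs ▸ p).elim0
    · exact_mod_cast h.ne'
  -- entrywise form of the vector equation, with j := p
  have hE : ∀ i k : Fin s, (∑ b, F' i b k * G p b) + (∑ a, F' a p k * G i a)
      - (∑ m, F' i p m * G m k) = 0 := by
    intro i k
    have h := congrFun (congrFun hveceq (i, p)) k
    simp only [Matrix.sub_apply, Matrix.add_apply, Matrix.zero_apply, Matrix.mul_apply,
      Matrix.kroneckerMap_apply, Matrix.one_apply, FstackC, Matrix.of_apply,
      Fintype.sum_prod_type, ite_mul, one_mul, zero_mul, Finset.sum_ite_eq,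
      Finset.sum_ite_eq', Finset.mem_univ, if_true, mul_ite, mul_zero, mul_one] at h
    simpa [hF', mul_comm] using h
  -- normalization over ℂ
  have hc' : ∀ i j, ∑ m, ∑ k, F' i m k * F' j m k = (n : ℂ) * if i = j then 1 else 0 := by
    intro i j
    have := hc i j
    have : ((∑ m, ∑ k, f i m k * f j m k : ℝ) : ℂ) = ((n : ℝ) * if i = j then 1 else 0 : ℝ) := by
      exact_mod_cast congrArg Complex.ofReal this
    simpa [hF', apply_ite] using this
  -- Jacobi over ℂ, in rearranged form
  have jac : ∀ i a : Fin s,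
      ∑ k, (F' i q k * F' a p k - F' a q k * F' i p k) = ∑ k, F' p q k * F' k a i := by
    intro i a
    have h := hJ a i p q
    have h' : ∑ m, (F' a q m * F' m i p + F' i q m * F' a m p + F' p q m * F' a i m) = 0 := by
      have := congrArg Complex.ofReal h
      push_cast at this
      simpa [hF'] using this
    have cyc2 : ∀ a b c, F' c a b = F' a b c := fun a b c => (hcyc b c a).trans (hcyc a b c)
    have expand : ∀ m : Fin s, F' i q m * F' a p m - F' a q m * F' i p m - F' p q m * F' m a i
        = -(F' a q m * F' m i p + F' i q m * F' a m p + F' p q m * F' a i m) := by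
      intro m
      rw [cyc2 i p m, h23 a p m, hcyc m a i]; ring
    have hz : ∑ k, (F' i q k * F' a p k - F' a q k * F' i p k) - ∑ k, F' p q k * F' k a i = 0 := by
      rw [← Finset.sum_sub_distrib]
      calc ∑ k : Fin s, (F' i q k * F' a p k - F' a q k * F' i p k - F' p q k * F' k a i)
          = ∑ m : Fin s, -(F' a q m * F' m i p + F' i q m * F' a m p + F' p q m * F' a i m) :=
            Finset.sum_congr rfl fun m _ => expand m
        _ = -∑ m : Fin s, (F' a q m * F' m i p + F' i q m * F' a m p + F' p q m * F' a i m) := by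
            rw [Finset.sum_neg_distrib]
        _ = 0 := by rw [h', neg_zero]
    exact sub_eq_zero.mp hz
  have h13 : ∀ a b c, F' c b a = -F' a b c := by
    intro a b c; rw [h12 b c a, hcyc a b c]
  -- the trace identity
  have htr : ∀ k : Fin s, (FmatC s f k * G).trace = ∑ m, ∑ b, F' k m b * G b m := by
    intro k
    simp [Matrix.trace, Matrix.mul_apply, FmatC, Matrix.diag, hF']
  -- summing the vector equation against F' · q ·
  have hzero : ∑ i : Fin s, ∑ k : Fin s, F' i q k * ((∑ b, F' i b k * G p b)
      + (∑ a, F' a p k * G i a) - (∑ m, F' i p m * G m k)) = 0 := by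
    apply Finset.sum_eq_zero; intro i _
    apply Finset.sum_eq_zero; intro k _
    rw [hE i k, mul_zero]
  have hsplit : (∑ i : Fin s, ∑ k : Fin s, ∑ b : Fin s, F' i q k * (F' i b k * G p b))
      + (∑ i : Fin s, ∑ k : Fin s, ∑ a : Fin s, F' i q k * (F' a p k * G i a))
      - (∑ i : Fin s, ∑ k : Fin s, ∑ m : Fin s, F' i q k * (F' i p m * G m k)) = 0 := by
    rw [← hzero]
    rw [← Finset.sum_add_distrib, ← Finset.sum_sub_distrib]
    apply Finset.sum_congr rfl; intro i _
    rw [← Finset.sum_add_distrib, ← Finset.sum_sub_distrib]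
    apply Finset.sum_congr rfl; intro k _
    simp only [mul_sub, mul_add, Finset.mul_sum]
  -- term A equals n * G p q
  have hA : (∑ i : Fin s, ∑ k : Fin s, ∑ b : Fin s, F' i q k * (F' i b k * G p b))
      = (n : ℂ) * G p q := by
    calc (∑ i : Fin s, ∑ k : Fin s, ∑ b : Fin s, F' i q k * (F' i b k * G p b))
        = ∑ i : Fin s, ∑ b : Fin s, ∑ k : Fin s, F' i q k * (F' i b k * G p b) :=
          Finset.sum_congr rfl fun i _ => Finset.sum_comm
      _ = ∑ b : Fin s, ∑ i : Fin s, ∑ k : Fin s, F' i q k * (F' i b k * G p b) :=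
          Finset.sum_comm
      _ = ∑ b : Fin s, (∑ i : Fin s, ∑ k : Fin s, F' q i k * F' b i k) * G p b := by
          apply Finset.sum_congr rfl; intro b _
          rw [Finset.sum_mul]
          apply Finset.sum_congr rfl; intro i _
          rw [Finset.sum_mul]
          apply Finset.sum_congr rfl; intro k _
          rw [h12 q i k, h12 b i k]; ring
      _ = ∑ b : Fin s, ((n : ℂ) * if q = b then 1 else 0) * G p b := by
          apply Finset.sum_congr rfl; intro b _
          rw [hc' q b]
      _ = (n : ℂ) * G p q := by
          simp [ite_mul, mul_ite]
  -- term B reorganized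
  have hB : (∑ i : Fin s, ∑ k : Fin s, ∑ a : Fin s, F' i q k * (F' a p k * G i a))
      = ∑ i : Fin s, ∑ a : Fin s, (∑ k : Fin s, F' i q k * F' a p k) * G i a := by
    apply Finset.sum_congr rfl; intro i _
    calc (∑ k : Fin s, ∑ a : Fin s, F' i q k * (F' a p k * G i a))
        = ∑ a : Fin s, ∑ k : Fin s, F' i q k * (F' a p k * G i a) := Finset.sum_comm
      _ = ∑ a : Fin s, (∑ k : Fin s, F' i q k * F' a p k) * G i a := by
          apply Finset.sum_congr rfl; intro a _
          rw [Finset.sum_mul]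
          apply Finset.sum_congr rfl; intro k _
          ring
  -- term C reorganized
  have hC : (∑ i : Fin s, ∑ k : Fin s, ∑ m : Fin s, F' i q k * (F' i p m * G m k))
      = ∑ i : Fin s, ∑ a : Fin s, (∑ k : Fin s, F' a q k * F' i p k) * G i a := by
    calc (∑ x : Fin s, ∑ y : Fin s, ∑ z : Fin s, F' x q y * (F' x p z * G z y))
        = ∑ y : Fin s, ∑ x : Fin s, ∑ z : Fin s, F' x q y * (F' x p z * G z y) :=
          Finset.sum_comm
      _ = ∑ y : Fin s, ∑ z : Fin s, ∑ x : Fin s, F' x q y * (F' x p z * G z y) :=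
          Finset.sum_congr rfl fun y _ => Finset.sum_comm
      _ = ∑ a : Fin s, ∑ i : Fin s, (∑ k : Fin s, F' a q k * F' i p k) * G i a := by
          apply Finset.sum_congr rfl; intro a _
          apply Finset.sum_congr rfl; intro i _
          rw [Finset.sum_mul]
          apply Finset.sum_congr rfl; intro k _
          rw [h13 a q k, h13 i p k]; ring
      _ = ∑ i : Fin s, ∑ a : Fin s, (∑ k : Fin s, F' a q k * F' i p k) * G i a :=
          Finset.sum_comm
  -- the B - C combination equals the trace sum
  have hT : (∑ i : Fin s, ∑ k : Fin s, ∑ a : Fin s, F' i q k * (F' a p k * G i a))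
      - (∑ i : Fin s, ∑ k : Fin s, ∑ m : Fin s, F' i q k * (F' i p m * G m k))
      = ∑ k : Fin s, F' p q k * (FmatC s f k * G).trace := by
    rw [hB, hC, ← Finset.sum_sub_distrib]
    calc (∑ i : Fin s, ((∑ a : Fin s, (∑ k : Fin s, F' i q k * F' a p k) * G i a)
          - ∑ a : Fin s, (∑ k : Fin s, F' a q k * F' i p k) * G i a))
        = ∑ i : Fin s, ∑ a : Fin s, (∑ k : Fin s, F' p q k * F' k a i) * G i a := by
          apply Finset.sum_congr rfl; intro i _
          rw [← Finset.sum_sub_distrib]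
          apply Finset.sum_congr rfl; intro a _
          rw [← sub_mul, ← Finset.sum_sub_distrib, jac i a]
      _ = ∑ a : Fin s, ∑ i : Fin s, (∑ k : Fin s, F' p q k * F' k a i) * G i a :=
          Finset.sum_comm
      _ = ∑ a : Fin s, ∑ i : Fin s, ∑ k : Fin s, F' p q k * (F' k a i * G i a) := by
          apply Finset.sum_congr rfl; intro a _
          apply Finset.sum_congr rfl; intro i _
          rw [Finset.sum_mul]
          apply Finset.sum_congr rfl; intro k _
          ring
      _ = ∑ a : Fin s, ∑ k : Fin s, ∑ i : Fin s, F' p q k * (F' k a i * G i a) :=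
          Finset.sum_congr rfl fun a _ => Finset.sum_comm
      _ = ∑ k : Fin s, ∑ a : Fin s, ∑ i : Fin s, F' p q k * (F' k a i * G i a) :=
          Finset.sum_comm
      _ = ∑ k : Fin s, F' p q k * (FmatC s f k * G).trace := by
          apply Finset.sum_congr rfl; intro k _
          rw [htr k, Finset.mul_sum]
          apply Finset.sum_congr rfl; intro a _
          rw [Finset.mul_sum]
  -- combine
  have hkey : (n : ℂ) * G p q + ∑ k : Fin s, F' p q k * (FmatC s f k * G).trace = 0 := by
    rw [← hA, ← hT]; linear_combination hsplit
  have goalsum : ∑ k : Fin s, (f p q k : ℂ) * (FmatC s f k * G).trace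
      = ∑ k : Fin s, F' p q k * (FmatC s f k * G).trace := rfl
  rw [goalsum]
  field_simp
  linear_combination hkey
end
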